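/- arXiv:2512.12007 — 5 statements merged into one kernel-verified Lean document; each statement's English description precedes it below -/
import Mathlib

section
/- An RGF w of length n avoids the pattern corresponding to the partition 1/2/3 if and only if w consists only of the letters 1 and 2. -/
/-- The list of distinct letters of `u` in order of first occurrence. -/
def distinctsAux (u : List ℕ) : List ℕ :=
  u.foldl (fun acc x => if x ∈ acc then acc else acc ++ [x]) []

/-- The standardization of a word: relabel letters by order of first occurrence,
starting from `1`.  This is the restricted growth function of the set partition
determined by letter-equality, with blocks ordered by minima. -/
def stdWord (u : List ℕ) : List ℕ :=
  u.map (fun x => (distinctsAux u).idxOf x + 1)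

/-- `w` is a restricted growth function: each letter is a positive integer,
the first letter is `1`, and every letter is at most one more than the maximum
of the preceding letters. -/
def IsRGF (w : List ℕ) : Prop :=
  ∀ i : ℕ, ∀ h : i < w.length,
    1 ≤ w.get ⟨i, h⟩ ∧ w.get ⟨i, h⟩ ≤ ((w.take i).foldr max 0) + 1

/-- `w` avoids the pattern (RGF word) `v`: no subsequence of `w` standardizes to `v`.
This encodes set-partition pattern avoidance via the bijection with RGFs. -/
def AvoidsPat (w v : List ℕ) : Prop :=
  ¬ ∃ s : List ℕ, s.Sublist w ∧ stdWord s = v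

/-!
Standardizing a word `s` produces letters at most the number of distinct letters of `s`, so a
word over `{1, 2}` has no subsequence standardizing to `123`. Conversely, the letters of an RGF
form an initial segment of the positive integers, each one preceded by all smaller ones; so a
letter `x ≥ 3` is preceded by a `2`, which is preceded by a `1`, and `1 2 x` standardizes to
`123`.
-/

open List

theorem mem_foldl_distincts_iff (u acc : List ℕ) (x : ℕ) :
    x ∈ u.foldl (fun acc x => if x ∈ acc then acc else acc ++ [x]) acc ↔ x ∈ acc ∨ x ∈ u := by
  induction u generalizing acc with
  | nil => simp
  | cons a t ih =>
    rw [foldl_cons, ih]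
    by_cases h : a ∈ acc <;> simp [h] <;> grind

theorem nodup_foldl_distincts (u : List ℕ) {acc : List ℕ} (hacc : acc.Nodup) :
    (u.foldl (fun acc x => if x ∈ acc then acc else acc ++ [x]) acc).Nodup := by
  induction u generalizing acc with
  | nil => simpa using hacc
  | cons a t ih =>
    apply ih
    by_cases h : a ∈ acc
    · simpa [h] using hacc
    · simpa [h, nodup_append] using ⟨hacc, fun b hb hba => h (hba ▸ hb)⟩

theorem mem_distinctsAux {u : List ℕ} {x : ℕ} : x ∈ distinctsAux u ↔ x ∈ u := by
  simp [distinctsAux, mem_foldl_distincts_iff]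

theorem length_distinctsAux (u : List ℕ) : (distinctsAux u).length = u.toFinset.card := by
  have hset : (distinctsAux u).toFinset = u.toFinset := by
    ext x
    simp [mem_distinctsAux]
  rw [← hset]
  exact (toFinset_card_of_nodup (nodup_foldl_distincts u nodup_nil)).symm

theorem le_card_toFinset_of_mem_stdWord {u : List ℕ} {y : ℕ} (hy : y ∈ stdWord u) :
    y ≤ u.toFinset.card := by
  obtain ⟨a, ha, rfl⟩ := mem_map.mp hy
  have := idxOf_lt_length_iff.mpr (mem_distinctsAux.mpr ha)
  rw [length_distinctsAux] at this
  omega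

theorem stdWord_one_two_of_three_le {x : ℕ} (hx : 3 ≤ x) : stdWord [1, 2, x] = [1, 2, 3] := by
  have h1 : x ≠ 1 := by omega
  have h2 : x ≠ 2 := by omega
  simp [stdWord, distinctsAux, h1, h2, idxOf_cons, Ne.symm h1, Ne.symm h2, cond_eq_ite]

theorem IsRGF.of_prefix {l w : List ℕ} (hw : IsRGF w) (h : l <+: w) : IsRGF l := by
  obtain ⟨t, rfl⟩ := h
  intro i hi
  simpa [getElem_append_left hi, take_append_of_le_length hi.le] using hw i (by simp; omega)

theorem IsRGF.one_le {w : List ℕ} (hw : IsRGF w) {x : ℕ} (hx : x ∈ w) : 1 ≤ x := by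
  obtain ⟨i, hi, rfl⟩ := mem_iff_getElem.mp hx
  exact (hw i hi).1

theorem IsRGF.exists_le_succ {p q : List ℕ} {x : ℕ} (hw : IsRGF (p ++ x :: q)) (hx : 2 ≤ x) :
    ∃ z ∈ p, x ≤ z + 1 := by
  have hmax := (hw p.length (by simp)).2
  simp only [get_eq_getElem, getElem_append_right le_rfl, Nat.sub_self, getElem_cons_zero,
    take_left'] at hmax
  by_contra! h
  have := max_le_of_forall_le p (x - 2) fun z hz => by have := h z hz; omega
  change p.foldr max 0 ≤ x - 2 at this
  omega

theorem IsRGF.mem_of_le_of_mem {w : List ℕ} (hw : IsRGF w) {k z : ℕ} (hk : 1 ≤ k)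
    (hz : z ∈ w) (hkz : k ≤ z) : k ∈ w := by
  induction hlen : w.length using Nat.strong_induction_on generalizing w z with
  | _ n ih =>
    obtain ⟨p, q, rfl⟩ := append_of_mem hz
    rcases hkz.eq_or_lt with rfl | hlt
    · exact hz
    obtain ⟨z', hz', hzz'⟩ := hw.exists_le_succ (by omega)
    have hp : p.length < n := by simp [← hlen]
    exact mem_append_left _ <|
      ih _ hp (hw.of_prefix (prefix_append _ _)) hz' (by omega) rfl

theorem IsRGF.mem_of_lt {p q : List ℕ} {x k : ℕ} (hw : IsRGF (p ++ x :: q)) (hk : 1 ≤ k)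
    (hkx : k < x) : k ∈ p := by
  obtain ⟨z, hz, hxz⟩ := hw.exists_le_succ (by omega)
  exact (hw.of_prefix (prefix_append _ _)).mem_of_le_of_mem hk hz (by omega)

theorem IsRGF.one_two_sublist {w : List ℕ} (hw : IsRGF w) {x : ℕ} (hx : x ∈ w) (h3 : 2 < x) :
    [1, 2, x] <+ w := by
  obtain ⟨p, q, rfl⟩ := append_of_mem hx
  obtain ⟨p₁, p₂, rfl⟩ := append_of_mem (hw.mem_of_lt (k := 2) (by omega) h3)
  rw [append_assoc, cons_append] at hw
  have h1 : [1] <+ p₁ := singleton_sublist.mpr (hw.mem_of_lt le_rfl one_lt_two)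
  have h2x : [2, x] <+ 2 :: (p₂ ++ x :: q) :=
    (singleton_sublist.mpr (mem_append_right _ mem_cons_self)).cons_cons 2
  simpa [append_assoc] using h1.append h2x

theorem stmt3_general (w : List ℕ) (hw : IsRGF w) :
    AvoidsPat w [1, 2, 3] ↔ ∀ x ∈ w, x = 1 ∨ x = 2 := by
  constructor
  · intro havoid x hx
    by_contra! hx12
    have h3 : 2 < x := by have := hw.one_le hx; omega
    exact havoid ⟨_, hw.one_two_sublist hx h3, stdWord_one_two_of_three_le h3⟩
  · rintro h12 ⟨s, hsub, hstd⟩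
    have hthree : 3 ≤ s.toFinset.card :=
      le_card_toFinset_of_mem_stdWord (by simp [hstd])
    have hsub12 : s.toFinset ⊆ {1, 2} := fun x hx => by
      simpa using h12 x (hsub.subset (mem_toFinset.mp hx))
    have := (Finset.card_le_card hsub12).trans Finset.card_le_two
    omega

/-- An RGF of length $n$ avoids the pattern $1/2/3$ (the RGF word `[1,2,3]`)
iff it consists only of the letters 1 and 2. -/
theorem stmt3 (n : ℕ) (w : List ℕ) (hw : IsRGF w) (hn : w.length = n) :
    AvoidsPat w [1, 2, 3] ↔ ∀ x ∈ w, x = 1 ∨ x = 2 :=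
  stmt3_general w hw
end

section
/- An RGF w of length n avoids the pattern 123 if and only if no letter of w is repeated more than twice. -/
theorem prefix_foldl_insertNew (t acc : List ℕ) :
    acc <+: t.foldl (fun acc x => if x ∈ acc then acc else acc ++ [x]) acc := by
  induction t generalizing acc with
  | nil => exact List.prefix_refl acc
  | cons y t ih =>
    rw [List.foldl_cons]
    split_ifs
    · exact ih acc
    · exact (List.prefix_append acc [y]).trans (ih _)

theorem distinctsAux_cons (a : ℕ) (t : List ℕ) : ∃ l, distinctsAux (a :: t) = a :: l := by
  obtain ⟨l, hl⟩ := prefix_foldl_insertNew t [a]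
  exact ⟨l, by simpa [distinctsAux] using hl.symm⟩

theorem stdWord_replicate (k a : ℕ) : stdWord (List.replicate k a) = List.replicate k 1 := by
  cases k with
  | zero => rfl
  | succ k =>
    obtain ⟨l, hl⟩ := distinctsAux_cons a (List.replicate k a)
    simp [stdWord, List.replicate_succ, hl]

theorem stdWord_eq_replicate_one_iff (s : List ℕ) (k : ℕ) :
    stdWord s = List.replicate k 1 ↔ ∃ a, s = List.replicate k a := by
  refine ⟨fun hstd => ?_, fun ⟨a, hs⟩ => hs ▸ stdWord_replicate k a⟩
  have hlen : s.length = k := by simpa [stdWord] using congrArg List.length hstd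
  cases s with
  | nil => exact ⟨0, by simp [← hlen]⟩
  | cons a t =>
    obtain ⟨l, hl⟩ := distinctsAux_cons a t
    refine ⟨a, List.eq_replicate_iff.mpr ⟨hlen, fun x hx => ?_⟩⟩
    have hidx : (a :: l).idxOf x = 0 := by
      have := List.eq_replicate_iff.mp hstd |>.2 _ (List.mem_map_of_mem hx)
      rw [hl] at this
      omega
    exact ((List.idxOf_eq_zero_iff_head_eq (List.cons_ne_nil a l)).mp hidx).symm

theorem avoidsPat_replicate_one_iff (w : List ℕ) (k : ℕ) :
    AvoidsPat w (List.replicate k 1) ↔ ∀ x, w.count x < k := by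
  simp only [AvoidsPat, stdWord_eq_replicate_one_iff, not_exists, not_and]
  refine ⟨fun h x => ?_, fun h s hs a hsa => ?_⟩
  · by_contra! hk
    exact h _ (List.replicate_sublist_iff.mpr hk) x rfl
  · exact (h a).not_ge (List.replicate_sublist_iff.mp (hsa ▸ hs))

theorem stmt6_general (w : List ℕ) :
    AvoidsPat w [1, 1, 1] ↔ ∀ x : ℕ, w.count x ≤ 2 :=
  (avoidsPat_replicate_one_iff w 3).trans <| forall_congr' fun _ => Nat.lt_succ_iff

/-- An RGF of length $n$ avoids the pattern $123$ (the RGF word `[1,1,1]`)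
iff no letter is repeated more than twice. -/
theorem stmt6 (n : ℕ) (w : List ℕ) (hw : IsRGF w) (hn : w.length = n) :
    AvoidsPat w [1, 1, 1] ↔ ∀ x : ℕ, w.count x ≤ 2 :=
  stmt6_general w
end

section
/- For n > k ≥ 1, the number of RGFs of length n with maximal letter k avoiding the pattern 12/3 equals k; namely, these are the RGFs with initial run 1,2,…,k followed by n−k copies of a single letter j ≤ k, of which there are exactly k. -/
private lemma foldr_max_init (l : List ℕ) (b : ℕ) : l.foldr max b = max (l.foldr max 0) b := by
  induction l with
  | nil => simp
  | cons a t ih => simp [List.foldr, ih, max_assoc]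

private lemma foldr_max_append (l1 l2 : List ℕ) :
    (l1 ++ l2).foldr max 0 = max (l1.foldr max 0) (l2.foldr max 0) := by
  rw [List.foldr_append, foldr_max_init]

private lemma le_foldr_max {l : List ℕ} {x : ℕ} (h : x ∈ l) : x ≤ l.foldr max 0 := by
  induction l with
  | nil => simp at h
  | cons a t ih =>
    rcases List.mem_cons.1 h with rfl | h'
    · exact le_max_left _ _
    · exact le_trans (ih h') (le_max_right _ _)

private lemma foldr_max_le {l : List ℕ} {c : ℕ} (h : ∀ x ∈ l, x ≤ c) : l.foldr max 0 ≤ c := by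
  induction l with
  | nil => simp
  | cons a t ih => simpa using ⟨h a (by simp), ih fun x hx => h x (by simp [hx])⟩

private lemma foldr_max_mem (l : List ℕ) : l.foldr max 0 = 0 ∨ l.foldr max 0 ∈ l := by
  induction l with
  | nil => simp
  | cons a t ih =>
    rcases max_choice a (t.foldr max 0) with h | h
    · right; simp [List.foldr, h]
    · rcases ih with h0 | hm
      · simp [List.foldr, h, h0]
      · right; simp [List.foldr, h, hm]

private lemma range_map_max (k : ℕ) : ((List.range k).map (· + 1)).foldr max 0 = k := by
  induction k with
  | zero => simp
  | succ m ih =>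
    rw [List.range_succ, List.map_append, foldr_max_append, ih]
    simp

private lemma replicate_max_le (m j : ℕ) : (List.replicate m j).foldr max 0 ≤ j :=
  foldr_max_le fun x hx => le_of_eq (List.eq_of_mem_replicate hx)

private lemma std_aab {a b : ℕ} (h : a ≠ b) : stdWord [a, a, b] = [1, 1, 2] := by
  simp [stdWord, distinctsAux, h.symm, List.idxOf_cons, Bool.cond_eq_ite, h]

private lemma foldl_acc_prefix (t : List ℕ) (acc : List ℕ) :
    ∃ r, t.foldl (fun acc x => if x ∈ acc then acc else acc ++ [x]) acc = acc ++ r := by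
  induction t generalizing acc with
  | nil => exact ⟨[], by simp⟩
  | cons h t ih =>
    simp only [List.foldl]
    by_cases hmem : h ∈ acc
    · simpa [hmem] using ih acc
    · rcases ih (acc ++ [h]) with ⟨r, hr⟩
      exact ⟨[h] ++ r, by simp [hmem, hr]⟩

private lemma distincts_cons (x : ℕ) (t : List ℕ) :
    ∃ r, distinctsAux (x :: t) = x :: r := by
  rcases foldl_acc_prefix t [x] with ⟨r, hr⟩
  exact ⟨r, by simpa [distinctsAux] using hr⟩

private lemma std_eq_112 {s : List ℕ} (h : stdWord s = [1, 1, 2]) :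
    ∃ a b, s = [a, a, b] ∧ a ≠ b := by
  have hlen : s.length = 3 := by
    have := congrArg List.length h
    simpa [stdWord] using this
  match s, hlen with
  | [x, y, z], _ =>
    rcases distincts_cons x [y, z] with ⟨r, hr⟩
    simp only [stdWord, List.map, hr, List.cons.injEq] at h
    obtain ⟨h1, h2, h3, -⟩ := h
    have hy : y = x := by
      by_contra hxy
      simp [List.idxOf_cons, Bool.cond_eq_ite, hxy] at h2
      exact hxy h2.symm
    have hz : z ≠ x := by
      intro hzx
      simp [hzx, List.idxOf_cons_self] at h3
    exact ⟨x, z, by simp [hy], fun hh => hz hh.symm⟩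

private lemma avoids_iff {w : List ℕ} :
    AvoidsPat w [1, 1, 2] ↔ ∀ a b : ℕ, [a, a, b].Sublist w → a = b := by
  constructor
  · intro h a b hsub
    by_contra hab
    exact h ⟨[a, a, b], hsub, std_aab hab⟩
  · rintro H ⟨s, hsub, hstd⟩
    rcases std_eq_112 hstd with ⟨a, b, rfl, hab⟩
    exact hab (H a b hsub)

private lemma pairwise3 {N : ℕ} {p q r : Fin N} (h1 : (p : ℕ) < q) (h2 : (q : ℕ) < r) :
    List.Pairwise (fun x1 x2 : Fin N => (x1 : ℕ) < x2) [p, q, r] := by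
  refine List.Pairwise.cons ?_ (List.Pairwise.cons ?_ (List.pairwise_singleton _ _))
  · intro b hb
    rcases List.mem_cons.1 hb with rfl | hb
    · exact h1
    · rw [List.mem_singleton] at hb
      subst hb
      exact h1.trans h2
  · intro b hb
    rw [List.mem_singleton] at hb
    subst hb
    exact h2

private def wf (n k j : ℕ) : List ℕ :=
  (List.range k).map (· + 1) ++ List.replicate (n - k) j

private lemma wf_mem (n k : ℕ) (hk : 1 ≤ k) (hkn : k < n) {j : ℕ} (hj1 : 1 ≤ j) (hjk : j ≤ k) :
    IsRGF (wf n k j) ∧ (wf n k j).length = n ∧ (wf n k j).foldr max 0 = k ∧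
      AvoidsPat (wf n k j) [1, 1, 2] := by
  have hlen : (wf n k j).length = n := by simp [wf]; omega
  have hpreflen : ((List.range k).map (· + 1)).length = k := by simp
  refine ⟨?_, hlen, ?_, ?_⟩
  · intro i h
    have hi : i < n := hlen ▸ h
    simp only [List.get_eq_getElem]
    rcases lt_or_ge i k with hik | hik
    · have hval : (wf n k j)[i] = i + 1 := by
        simp only [wf]
        rw [List.getElem_append_left (by simpa using hik)]
        simp
      have htake : (wf n k j).take i = (List.range i).map (· + 1) := by
        unfold wf
        rw [List.take_append, hpreflen, Nat.sub_eq_zero_of_le hik.le,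
          List.take_zero, List.append_nil, ← List.map_take, List.take_range,
          min_eq_left hik.le]
      rw [hval, htake, range_map_max]
      omega
    · have hval : (wf n k j)[i] = j := by
        simp only [wf]
        rw [List.getElem_append_right (by simpa using hik)]
        simp
      have htake : (wf n k j).take i = (List.range k).map (· + 1) ++
          (List.replicate (n - k) j).take (i - k) := by
        unfold wf
        rw [List.take_append, hpreflen,
          List.take_of_length_le (by simpa using hik)]
      have : k ≤ ((wf n k j).take i).foldr max 0 := by
        rw [htake, foldr_max_append, range_map_max]
        exact le_max_left _ _
      rw [hval]
      omega
  · unfold wf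
    rw [foldr_max_append, range_map_max]
    have := replicate_max_le (n - k) j
    omega
  · rw [avoids_iff]
    intro a b hsub
    unfold wf at hsub
    rcases List.sublist_append_iff.1 hsub with ⟨l1, l2, heq, h1, h2⟩
    have hnd : l1.Nodup :=
      h1.nodup ((List.nodup_range (n := k)).map (add_left_injective 1))
    have hrep : ∀ x ∈ l2, x = j := fun x hx => List.eq_of_mem_replicate (h2.subset hx)
    match l1, heq with
    | [], heq =>
      obtain rfl : l2 = [a, a, b] := by simpa using heq.symm
      have ha : a = j := hrep a (by simp)
      have hb : b = j := hrep b (by simp)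
      rw [ha, hb]
    | [x], heq =>
      simp only [List.singleton_append, List.cons.injEq] at heq
      obtain ⟨rfl, heq2⟩ := heq
      obtain rfl : l2 = [a, b] := heq2.symm
      have ha : a = j := hrep a (by simp)
      have hb : b = j := hrep b (by simp)
      rw [ha, hb]
    | x :: y :: t, heq =>
      exfalso
      simp only [List.cons_append, List.cons.injEq] at heq
      obtain ⟨rfl, rfl, -⟩ := heq
      simp at hnd

/-- For $n > k ≥ 1$, the number of RGFs of length $n$ with maximal letter $k$
avoiding $12/3$ equals $k$. -/
theorem stmt10 (n k : ℕ) (hk : 1 ≤ k) (hkn : k < n) :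
    Set.ncard {w : List ℕ | IsRGF w ∧ w.length = n ∧ w.foldr max 0 = k ∧
      AvoidsPat w [1, 1, 2]} = k := by
  have hset : {w : List ℕ | IsRGF w ∧ w.length = n ∧ w.foldr max 0 = k ∧
      AvoidsPat w [1, 1, 2]} = ↑((Finset.Icc 1 k).image (wf n k)) := by
    ext w
    simp only [Set.mem_setOf_eq, Finset.coe_image, Set.mem_image, Finset.mem_coe,
      Finset.mem_Icc]
    constructor
    · rintro ⟨hw, hlen, hmax, hav⟩
      rw [avoids_iff] at hav
      have hall_le : ∀ x ∈ w, x ≤ k := fun x hx => hmax ▸ le_foldr_max hx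
      -- the maximal letter k occurs in w
      have hkmem : k ∈ w := by
        rcases foldr_max_mem w with h0 | hm
        · omega
        · rwa [hmax] at hm
      rcases List.mem_iff_get.1 hkmem with ⟨m, hm⟩
      have hm' : (w[(m : ℕ)]'m.isLt) = k := by simpa [List.get_eq_getElem] using hm
      -- the initial run is 1, 2, ..., k
      have key : ∀ i, i < k → ∀ h : i < w.length, w.get ⟨i, h⟩ = i + 1 := by
        intro i
        induction i using Nat.strong_induction_on with
        | _ i IH =>
          intro hik hi
          have htake : w.take i = (List.range i).map (· + 1) := by
            apply List.ext_getElem (by simp [hlen]; omega)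
            intro m h1 h2
            have hmi : m < i := by simpa [hlen] using h2
            have hmw : m < w.length := by omega
            rw [List.getElem_take]
            have := IH m hmi (by omega) hmw
            simpa using this
          obtain ⟨hge, hle⟩ := hw i hi
          rw [htake, range_map_max] at hle
          by_contra hne
          simp only [List.get_eq_getElem] at hne hge hle
          set a := w[i] with ha
          have hai : a ≤ i := by omega
          have hp : a - 1 < i := by omega
          have hpw : a - 1 < w.length := by omega
          have hwp : w[a - 1] = a := by
            have := IH (a - 1) hp (by omega) hpw
            simp only [List.get_eq_getElem] at this
            omega
          have him : i < (m : ℕ) := by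
            rcases lt_trichotomy (m : ℕ) i with h | h | h
            · have := IH m h (by omega) m.isLt
              simp only [List.get_eq_getElem] at this
              omega
            · simp only [h] at hm'
              omega
            · exact h
          -- build the forbidden pattern
          have hpair : List.Pairwise (fun x1 x2 : Fin w.length => (x1 : ℕ) < x2)
              [⟨a - 1, hpw⟩, ⟨i, hi⟩, m] := pairwise3 hp him
          have hsub := List.map_getElem_sublist hpair
          simp only [List.map, List.get_eq_getElem, Fin.getElem_fin] at hsub
          rw [hwp, ← ha, hm'] at hsub
          have := hav a k hsub
          omega
      have hklen : k < w.length := by omega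
      set j := w[k]'hklen with hjdef
      have hj1 : 1 ≤ j := by
        have := (hw k hklen).1
        simpa [List.get_eq_getElem] using this
      have hjk : j ≤ k := hall_le j (by rw [hjdef]; exact w.get_mem ⟨k, hklen⟩)
      refine ⟨j, ⟨hj1, hjk⟩, ?_⟩
      -- everything after position k equals j
      have htail : ∀ l (hl : l < w.length), k ≤ l → w[l] = j := by
        intro l hl hkl
        rcases eq_or_lt_of_le hkl with rfl | hkl
        · rfl
        · have hpw : j - 1 < w.length := by omega
          have hwp : w[j - 1] = j := by
            have := key (j - 1) (by omega) hpw
            simp only [List.get_eq_getElem] at this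
            omega
          have hpair : List.Pairwise (fun x1 x2 : Fin w.length => (x1 : ℕ) < x2)
              [⟨j - 1, hpw⟩, ⟨k, hklen⟩, ⟨l, hl⟩] := pairwise3 (show j - 1 < k by omega) hkl
          have hsub := List.map_getElem_sublist hpair
          simp only [List.map, List.get_eq_getElem, Fin.getElem_fin] at hsub
          rw [hwp, ← hjdef] at hsub
          exact (hav j w[l] hsub).symm
      symm
      apply List.ext_getElem (by simp [wf, hlen]; omega)
      intro i h1 h2
      have hin : i < n := by
        simp only [wf, List.length_append, List.length_map, List.length_range,
          List.length_replicate] at h2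
        omega
      rcases lt_or_ge i k with hik | hik
      · simp only [wf]
        rw [List.getElem_append_left (by simpa using hik)]
        have := key i hik (by omega)
        simp only [List.get_eq_getElem] at this
        simp [this]
      · simp only [wf]
        rw [List.getElem_append_right (by simpa using hik)]
        simp [htail i (by omega) hik]
    · rintro ⟨j, ⟨hj1, hjk⟩, rfl⟩
      exact wf_mem n k hk hkn hj1 hjk
  have hinj : Set.InjOn (wf n k) ↑(Finset.Icc 1 k) := by
    intro j1 _ j2 _ heq
    unfold wf at heq
    have := List.append_cancel_left heq
    exact List.replicate_right_injective (by omega) this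
  rw [hset, Set.ncard_coe_finset, Finset.card_image_of_injOn hinj, Nat.card_Icc]
  omega
end

section
/- For a Dyck path P, if Q covers P in the ascent order (Q obtained from P by replacing a factor D U^k D by U^k D D), then P lies weakly below Q, i.e., Q covers or exceeds P in the Stanley order. -/
/-- A Dyck path, encoded as a list of booleans (`true` = up step `U`,
`false` = down step `D`): every prefix has at least as many up steps as down
steps, and the total numbers of up and down steps agree. -/
def IsDyck (p : List Bool) : Prop :=
  (∀ i : ℕ, (p.take i).count false ≤ (p.take i).count true) ∧
    p.count true = p.count false

/-- The cover relation of the ascent order: `Q` is obtained from `P` by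
replacing a factor `D U^k D` (with `k ≥ 1`) by `U^k D D`. -/
def AscentCover (P Q : List Bool) : Prop :=
  ∃ (A B : List Bool) (k : ℕ), 1 ≤ k ∧
    P = A ++ [false] ++ List.replicate k true ++ [false] ++ B ∧
    Q = A ++ List.replicate k true ++ [false, false] ++ B

/-- The Stanley order: `P ≤ Q` iff every prefix of `P` has at most as many up
steps as the corresponding prefix of `Q`. -/
def StanleyLE (P Q : List Bool) : Prop :=
  ∀ l : ℕ, (P.take l).count true ≤ (Q.take l).count true

lemma cnt_cons_false (B : List Bool) (j : ℕ) :
    ((false :: B).take j).count true = (B.take (j - 1)).count true := by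
  cases j <;> simp

lemma cnt_rep (k : ℕ) (B : List Bool) (m : ℕ) :
    ((List.replicate k true ++ B).take m).count true
      = min m k + (B.take (m - k)).count true := by
  rw [List.take_append, List.count_append, List.take_replicate,
    List.count_replicate, List.length_replicate]
  simp

lemma seg_le (k : ℕ) (B : List Bool) (m : ℕ) :
    ((false :: (List.replicate k true ++ false :: B)).take m).count true
      ≤ ((List.replicate k true ++ false :: false :: B).take m).count true := by
  rw [cnt_cons_false, cnt_rep, cnt_rep, cnt_cons_false, cnt_cons_false, cnt_cons_false]
  have h1 : m - 1 - k - 1 = m - k - 1 - 1 := by omega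
  rw [h1]
  exact Nat.add_le_add_right (by omega) _

/-- If `Q` covers `P` in the ascent order, then `P` lies weakly below `Q`
in the Stanley order. -/
theorem stmt15 (n : ℕ) (P Q : List Bool) (hP : IsDyck P) (hPn : P.count true = n)
    (hQ : IsDyck Q) (hQn : Q.count true = n) (h : AscentCover P Q) :
    StanleyLE P Q := by
  obtain ⟨A, B, k, hk, hPe, hQe⟩ := h
  intro l
  subst hPe hQe
  have hP' : (A ++ [false] ++ List.replicate k true ++ [false] ++ B)
      = A ++ (false :: (List.replicate k true ++ false :: B)) := by
    simp
  have hQ' : (A ++ List.replicate k true ++ [false, false] ++ B)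
      = A ++ (List.replicate k true ++ false :: false :: B) := by
    simp
  rw [hP', hQ', List.take_append, List.take_append,
    List.count_append, List.count_append]
  exact Nat.add_le_add_left (seg_le k B _) _
end

section
/- The composition of two confluent epimorphisms between topological graphs is a confluent epimorphism, and every monotone epimorphism is confluent. -/
/-- A subset `S` of the vertex set of a graph (given by a reflexive symmetric
edge relation `E`) is connected if any two of its vertices are joined by a
walk staying inside `S`. -/
def ConnIn {V : Type*} (E : V → V → Prop) (S : Set V) : Prop :=
  ∀ a ∈ S, ∀ b ∈ S, Relation.ReflTransGen (fun x y => E x y ∧ x ∈ S ∧ y ∈ S) a b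

/-- An epimorphism of graphs: a homomorphism surjective on vertices and
edges. -/
def IsEpi {V W : Type*} (EV : V → V → Prop) (EW : W → W → Prop) (f : V → W) : Prop :=
  (∀ x y, EV x y → EW (f x) (f y)) ∧ Function.Surjective f ∧
    ∀ a b, EW a b → ∃ x y, EV x y ∧ f x = a ∧ f y = b

/-- `f` is confluent: for every connected subset `Q` of the codomain and every
vertex `a` with `f a ∈ Q`, there is a connected set `C` containing `a` with
`f '' C = Q`. -/
def ConfluentMap {V W : Type*} (EV : V → V → Prop) (EW : W → W → Prop)
    (f : V → W) : Prop :=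
  ∀ Q : Set W, ConnIn EW Q → ∀ a : V, f a ∈ Q →
    ∃ C : Set V, ConnIn EV C ∧ a ∈ C ∧ f '' C = Q

/-- `f` is monotone: preimages of connected sets are connected. -/
def MonotoneMap {V W : Type*} (EV : V → V → Prop) (EW : W → W → Prop)
    (f : V → W) : Prop :=
  ∀ Q : Set W, ConnIn EW Q → ConnIn EV (f ⁻¹' Q)

/-- The composition of confluent epimorphisms of (finite) graphs is a
confluent epimorphism, and every monotone epimorphism is confluent. -/
theorem stmt18 {V W X : Type*} [Finite V] [Finite W] [Finite X]
    (EV : V → V → Prop) (EW : W → W → Prop) (EX : X → X → Prop)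
    (hV : Reflexive EV ∧ Symmetric EV) (hW : Reflexive EW ∧ Symmetric EW)
    (hX : Reflexive EX ∧ Symmetric EX) :
    (∀ (f : V → W) (g : W → X), IsEpi EV EW f → IsEpi EW EX g →
      ConfluentMap EV EW f → ConfluentMap EW EX g →
      IsEpi EV EX (g ∘ f) ∧ ConfluentMap EV EX (g ∘ f)) ∧
    (∀ f : V → W, IsEpi EV EW f → MonotoneMap EV EW f → ConfluentMap EV EW f) := by
  constructor
  · intro f g hf hg cf cg
    refine ⟨⟨fun x y h => hg.1 _ _ (hf.1 _ _ h), hg.2.1.comp hf.2.1, ?_⟩, ?_⟩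
    · intro a b hab
      obtain ⟨x, y, hxy, hx, hy⟩ := hg.2.2 a b hab
      obtain ⟨u, v, huv, hu, hv⟩ := hf.2.2 x y hxy
      exact ⟨u, v, huv, by simp [Function.comp, hu, hx], by simp [Function.comp, hv, hy]⟩
    · intro Q hQ a ha
      obtain ⟨C', hC', haC', hC'Q⟩ := cg Q hQ (f a) ha
      obtain ⟨C, hC, haC, hCC'⟩ := cf C' hC' a haC'
      exact ⟨C, hC, haC, by rw [Set.image_comp, hCC', hC'Q]⟩
  · intro f hf hm Q hQ a ha
    refine ⟨f ⁻¹' Q, hm Q hQ, ha, ?_⟩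
    exact Set.image_preimage_eq Q hf.2.1
end
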